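/- Let A be a real symmetric positive definite matrix, Q a real symmetric negative semidefinite matrix, and A₁ a real symmetric matrix. If λ ∈ ℂ, ξ ∈ ℂ with Re ξ > 0, η ≥ 0, and det(ξA + λA₁ − ηQ) = 0, then λ is not purely imaginary. -/

import Mathlib

/-!
With `l = t i`, the matrix splits as `P + i S` with `P = Re ξ • A - η • Q` real positive definite
and `S = Im ξ • A + t • A1` real symmetric. For a complex vector `v`, both `v* P v` and `v* S v`
are real, and `v* P v > 0` when `v ≠ 0`; hence `Re (v* (P + i S) v) > 0`, so `P + i S` has trivial
kernel.
-/

open Matrix Complex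

noncomputable def cpx {m n : Type*} (M : Matrix m n ℝ) : Matrix m n ℂ :=
  M.map (fun x => (x : ℂ))

open scoped ComplexOrder

namespace Matrix

variable {ι : Type*} [Fintype ι]

lemma cpx_mulVec_ofReal (M : Matrix ι ι ℝ) (x : ι → ℝ) :
    cpx M *ᵥ (ofReal ∘ x) = ofReal ∘ (M *ᵥ x) :=
  funext fun i => (RingHom.map_mulVec ofRealHom M x i).symm

lemma ofReal_comp_dotProduct (x y : ι → ℝ) :
    (ofReal ∘ x) ⬝ᵥ (ofReal ∘ y) = ((x ⬝ᵥ y : ℝ) : ℂ) :=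
  (RingHom.map_dotProduct ofRealHom x y).symm

lemma star_dotProduct_cpx_mulVec {M : Matrix ι ι ℝ} (hM : M.IsSymm) (v : ι → ℂ) :
    star v ⬝ᵥ cpx M *ᵥ v =
      (((re ∘ v) ⬝ᵥ M *ᵥ (re ∘ v) + (im ∘ v) ⬝ᵥ M *ᵥ (im ∘ v) : ℝ) : ℂ) := by
  set x := re ∘ v
  set y := im ∘ v
  have hv : v = ofReal ∘ x + I • ofReal ∘ y := by
    ext i; simp [x, y, Complex.ext_iff]
  have hsv : star v = ofReal ∘ x - I • ofReal ∘ y := by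
    ext i; simp [x, y, Complex.ext_iff]
  have hcross : y ⬝ᵥ M *ᵥ x = x ⬝ᵥ M *ᵥ y := by
    rw [dotProduct_mulVec, ← mulVec_transpose, hM.eq, dotProduct_comm]
  clear_value x y
  rw [hsv, hv]
  simp only [mulVec_add, mulVec_smul, cpx_mulVec_ofReal, sub_dotProduct, dotProduct_add,
    smul_dotProduct, dotProduct_smul, ofReal_comp_dotProduct, hcross, smul_eq_mul]
  push_cast
  ring_nf
  rw [I_sq]
  ring

omit [Fintype ι] in
lemma IsSymm.isHermitian_cpx {M : Matrix ι ι ℝ} (hM : M.IsSymm) : (cpx M).IsHermitian := by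
  ext i j
  simp [cpx, hM.apply]

lemma PosDef.cpx {P : Matrix ι ι ℝ} (hP : P.PosDef) : (cpx P).PosDef := by
  have hPs : P.IsSymm := isHermitian_iff_isSymm.mp hP.isHermitian
  refine .of_dotProduct_mulVec_pos hPs.isHermitian_cpx fun v hv => ?_
  have hxy : re ∘ v ≠ 0 ∨ im ∘ v ≠ 0 := by
    by_contra! h
    exact hv (funext fun i => Complex.ext (congrFun h.1 i) (congrFun h.2 i))
  rw [star_dotProduct_cpx_mulVec hPs, zero_lt_real]
  have hnonneg (x : ι → ℝ) : 0 ≤ x ⬝ᵥ P *ᵥ x := by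
    simpa using hP.posSemidef.dotProduct_mulVec_nonneg x
  have hpos {x : ι → ℝ} (hx : x ≠ 0) : 0 < x ⬝ᵥ P *ᵥ x := by
    simpa using hP.dotProduct_mulVec_pos hx
  rcases hxy with h | h
  · exact add_pos_of_pos_of_nonneg (hpos h) (hnonneg _)
  · exact add_pos_of_nonneg_of_pos (hnonneg _) (hpos h)

theorem det_cpx_add_I_smul_cpx_ne_zero [DecidableEq ι] {P S : Matrix ι ι ℝ} (hP : P.PosDef)
    (hS : S.IsSymm) :
    (cpx P + I • cpx S).det ≠ 0 := by
  intro h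
  obtain ⟨v, hv0, hv⟩ := exists_mulVec_eq_zero_iff.mpr h
  have hform : star v ⬝ᵥ cpx P *ᵥ v + I * (star v ⬝ᵥ cpx S *ᵥ v) = 0 := by
    simpa [add_mulVec, smul_mulVec, dotProduct_add] using congrArg (star v ⬝ᵥ ·) hv
  have hpos := (pos_iff.mp (hP.cpx.dotProduct_mulVec_pos hv0)).1
  rw [star_dotProduct_cpx_mulVec hS] at hform
  exact hpos.ne' (by simpa using congrArg re hform)

end Matrix

/-- Let `A` be real symmetric positive definite, `Q` real symmetric negative semidefinite and
`A₁` real symmetric. If `Re ξ > 0`, `η ≥ 0` and `det(ξA + λA₁ − ηQ) = 0`, then `λ` is not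
purely imaginary. -/
theorem stmt12 {n : ℕ} (A Q A1 : Matrix (Fin n) (Fin n) ℝ)
    (hA : A.PosDef) (hQ : (-Q).PosSemidef) (hA1 : A1.IsSymm)
    (l ξ : ℂ) (hξ : 0 < ξ.re) (η : ℝ) (hη : 0 ≤ η)
    (hdet : (ξ • cpx A + l • cpx A1 - (η : ℂ) • cpx Q).det = 0) :
    l.re ≠ 0 := by
  intro hl
  have hsplit : ξ • cpx A + l • cpx A1 - (η : ℂ) • cpx Q =
      cpx (ξ.re • A + η • -Q) + I • cpx (ξ.im • A + l.im • A1) := by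
    ext i j
    simp [cpx, hl, Complex.ext_iff]
    ring
  have hAs : A.IsSymm := isHermitian_iff_isSymm.mp hA.isHermitian
  exact det_cpx_add_I_smul_cpx_ne_zero ((hA.smul hξ).add_posSemidef (hQ.smul hη))
    ((hAs.smul _).add (hA1.smul _)) (hsplit ▸ hdet)
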